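/- arXiv:2409.09102 — 5 statements merged into one kernel-verified Lean document; each statement's English description precedes it below -/
import Mathlib

section
/- Let (Ξ, d_Ξ) be a Polish space (complete separable metric space) and let (C, d_C) be a compact metric space. Let J : Ξ × C → ℝ be lower semi-continuous (jointly, with respect to the product topology), and assume that for every c ∈ C the map ξ ↦ J(ξ, c) is continuous on Ξ. Then there exists a Borel measurable map c* : Ξ → C such that J(ξ, c*(ξ)) = min_{c ∈ C} J(ξ, c) for all ξ ∈ Ξ. -/
/-!
The minimizers of `J (ξ, ·)` form the sections `A ξ` of the argmin graph
`{(ξ, c) | ∀ c', J (ξ, c) ≤ J (ξ, c')}`, which is closed because `J` is lower semicontinuous and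
each `J (·, c')` is continuous. Since `C` is compact, projecting closed sets along `C` keeps them
closed, so `{ξ | A ξ ∩ K ≠ ∅}` is closed, in particular Borel, for every closed `K`. A
Kuratowski–Ryll-Nardzewski argument then gives a measurable selection: at stage `n` choose the
first point of a dense sequence whose `2⁻ⁿ`-ball meets `A ξ` inside the previous ball. These
choices are measurable in `ξ`, form a Cauchy sequence, and converge to a point of the closed set
`A ξ`.
-/

open Filter Metric Set Topology TopologicalSpace

theorem MeasurableSet.setOf_apply_of_measurable {α : Type*} [MeasurableSpace α]
    {p : ℕ → α → Prop} (hp : ∀ n, MeasurableSet {x | p n x}) {g : α → ℕ} (hg : Measurable g) :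
    MeasurableSet {x | p (g x) x} :=
  measurableSet_setOfPred.2 <|
    (measurable_from_prod_countable_left (f := fun q : α × ℕ => p q.2 q.1)
      fun n => measurableSet_setOfPred.1 (hp n)).comp (measurable_id.prodMk hg)

section Selection

variable {Ξ C : Type*} [MetricSpace C] [SeparableSpace C] [Nonempty C]

theorem exists_denseSeq_inter_closedBall_nonempty {s : Set C} (hs : s.Nonempty) {ε : ℝ}
    (hε : 0 < ε) : ∃ k, (s ∩ closedBall (denseSeq C k) ε).Nonempty := by
  obtain ⟨x, hx⟩ := hs
  obtain ⟨k, hk⟩ := (denseRange_denseSeq C).exists_dist_lt x hε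
  exact ⟨k, x, hx, hk.le⟩

namespace MeasurableSelection

variable (A : Ξ → Set C) (hA : ∀ ξ, (A ξ).Nonempty)

open Classical

noncomputable def index :
    (n : ℕ) → (ξ : Ξ) → {k : ℕ // (A ξ ∩ closedBall (denseSeq C k) ((1 / 2 : ℝ) ^ n)).Nonempty}
  | 0, ξ =>
    have h := exists_denseSeq_inter_closedBall_nonempty (hA ξ) (pow_pos one_half_pos 0)
    ⟨Nat.find h, Nat.find_spec h⟩
  | n + 1, ξ =>
    have h :=
      exists_denseSeq_inter_closedBall_nonempty (index n ξ).2 (pow_pos one_half_pos (n + 1))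
    ⟨Nat.find h, (Nat.find_spec h).mono fun _ hx => ⟨hx.1.1, hx.2⟩⟩

theorem index_succ_spec (n : ℕ) (ξ : Ξ) :
    ((A ξ ∩ closedBall (denseSeq C (index A hA n ξ)) ((1 / 2) ^ n)) ∩
      closedBall (denseSeq C (index A hA (n + 1) ξ)) ((1 / 2) ^ (n + 1))).Nonempty :=
  Nat.find_spec (exists_denseSeq_inter_closedBall_nonempty (index A hA n ξ).2
    (pow_pos one_half_pos (n + 1)))

theorem dist_index_succ_le (n : ℕ) (ξ : Ξ) :
    dist (denseSeq C (index A hA n ξ)) (denseSeq C (index A hA (n + 1) ξ)) ≤ 2 * (1 / 2) ^ n := by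
  obtain ⟨x, ⟨-, hx⟩, hx'⟩ := index_succ_spec A hA n ξ
  calc _ ≤ (1 / 2) ^ n + (1 / 2) ^ (n + 1) := (dist_triangle_left _ _ x).trans (add_le_add hx hx')
    _ ≤ 2 * (1 / 2) ^ n := by rw [pow_succ]; linarith [pow_pos (one_half_pos (α := ℝ)) n]

theorem measurable_index [MeasurableSpace Ξ]
    (hA_meas : ∀ K, IsClosed K → MeasurableSet {ξ | (A ξ ∩ K).Nonempty})
    (n : ℕ) : Measurable fun ξ => (index A hA n ξ : ℕ) := by
  induction n with
  | zero => exact measurable_find _ fun k => hA_meas _ isClosed_closedBall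
  | succ n ih =>
    refine measurable_find _ fun k => MeasurableSet.setOf_apply_of_measurable
      (p := fun j ξ => (A ξ ∩ closedBall (denseSeq C j) ((1 / 2) ^ n) ∩
        closedBall (denseSeq C k) ((1 / 2) ^ (n + 1))).Nonempty) (fun j => ?_) ih
    simpa only [inter_assoc] using hA_meas _ (isClosed_closedBall.inter isClosed_closedBall)

end MeasurableSelection

open MeasurableSelection in
theorem exists_measurable_selection [MeasurableSpace Ξ] [CompleteSpace C] [MeasurableSpace C]
    [BorelSpace C]
    (A : Ξ → Set C) (hA : ∀ ξ, (A ξ).Nonempty) (hA_closed : ∀ ξ, IsClosed (A ξ))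
    (hA_meas : ∀ K, IsClosed K → MeasurableSet {ξ | (A ξ ∩ K).Nonempty}) :
    ∃ f : Ξ → C, Measurable f ∧ ∀ ξ, f ξ ∈ A ξ := by
  set u : ℕ → Ξ → C := fun n ξ => denseSeq C (index A hA n ξ)
  have hu_meas (n : ℕ) : Measurable (u n) :=
    measurable_from_nat.comp (measurable_index A hA hA_meas n)
  have hu_cauchy (ξ : Ξ) : CauchySeq (u · ξ) :=
    cauchySeq_of_le_geometric (1 / 2) 2 (by norm_num) (dist_index_succ_le A hA · ξ)
  choose f hf using fun ξ => cauchySeq_tendsto_of_complete (hu_cauchy ξ)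
  refine ⟨f, measurable_of_tendsto_metrizable hu_meas (tendsto_pi_nhds.2 hf), fun ξ => ?_⟩
  choose a haA ha_dist using fun n => (index A hA n ξ).2
  refine (hA_closed ξ).mem_of_tendsto ((hf ξ).congr_dist ?_) (Eventually.of_forall haA)
  exact squeeze_zero (fun _ => dist_nonneg) (fun n => (dist_comm _ _).trans_le (ha_dist n))
    (tendsto_pow_atTop_nhds_zero_of_lt_one (by norm_num) (by norm_num))

end Selection

section Argmin

variable {X Y : Type*} [TopologicalSpace X] [TopologicalSpace Y]

theorem LowerSemicontinuous.isClosed_setOf_forall_le {J : X × Y → ℝ}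
    (hJ : LowerSemicontinuous J) (hJ_cont : ∀ y, Continuous fun x => J (x, y)) :
    IsClosed {p : X × Y | ∀ y, J p ≤ J (p.1, y)} := by
  simp only [ofPred_forall]
  refine isClosed_iInter fun y => ?_
  have : LowerSemicontinuous fun p : X × Y => J p + -J (p.1, y) :=
    hJ.add ((hJ_cont y).comp continuous_fst).neg.lowerSemicontinuous
  convert this.isClosed_preimage 0 using 1
  ext p
  simp

theorem IsClosed.setOf_inter_nonempty_of_compactSpace [CompactSpace Y] {S : Set (X × Y)}
    (hS : IsClosed S) {K : Set Y} (hK : IsClosed K) :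
    IsClosed {x | ({y | (x, y) ∈ S} ∩ K).Nonempty} := by
  convert isClosedMap_fst_of_compactSpace _ (hS.inter (isClosed_univ.prod hK)) using 1
  ext x
  simp [Set.Nonempty]

end Argmin

theorem measurable_argmin_selection_general
    {Ξ : Type*} [MetricSpace Ξ]
    [MeasurableSpace Ξ] [BorelSpace Ξ]
    {C : Type*} [MetricSpace C] [CompactSpace C] [Nonempty C]
    [MeasurableSpace C] [BorelSpace C]
    (J : Ξ × C → ℝ)
    (hJ_lsc : LowerSemicontinuous J)
    (hJ_cont : ∀ c : C, Continuous fun ξ : Ξ => J (ξ, c)) :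
    ∃ cstar : Ξ → C, Measurable cstar ∧
      ∀ ξ : Ξ, ∀ c : C, J (ξ, cstar ξ) ≤ J (ξ, c) := by
  set S := {p : Ξ × C | ∀ c, J p ≤ J (p.1, c)}
  have hS : IsClosed S := hJ_lsc.isClosed_setOf_forall_le hJ_cont
  have hS_nonempty (ξ : Ξ) : {c | (ξ, c) ∈ S}.Nonempty := by
    obtain ⟨c, -, hc⟩ := LowerSemicontinuousOn.exists_isMinOn univ_nonempty isCompact_univ
      ((hJ_lsc.comp (Continuous.prodMk_right ξ)).lowerSemicontinuousOn univ)
    exact ⟨c, fun c' => hc (mem_univ c')⟩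
  exact exists_measurable_selection (fun ξ => {c | (ξ, c) ∈ S}) hS_nonempty
    (fun ξ => hS.preimage (Continuous.prodMk_right ξ))
    (fun K hK => (hS.setOf_inter_nonempty_of_compactSpace hK).measurableSet)

/-- Measurable selection of minimizers: if `Ξ` is a Polish space,
`C` a compact metric space, `J : Ξ × C → ℝ` is jointly lower semicontinuous and
continuous in the first variable, then there is a Borel measurable map
`cstar : Ξ → C` selecting, for each `ξ`, a minimizer of `J (ξ, ·)` over `C`
(i.e. `J (ξ, cstar ξ) = min_{c ∈ C} J (ξ, c)`, the minimum being attained). -/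
theorem measurable_argmin_selection
    {Ξ : Type*} [MetricSpace Ξ] [CompleteSpace Ξ] [TopologicalSpace.SeparableSpace Ξ]
    [MeasurableSpace Ξ] [BorelSpace Ξ]
    {C : Type*} [MetricSpace C] [CompactSpace C] [Nonempty C]
    [MeasurableSpace C] [BorelSpace C]
    (J : Ξ × C → ℝ)
    (hJ_lsc : LowerSemicontinuous J)
    (hJ_cont : ∀ c : C, Continuous fun ξ : Ξ => J (ξ, c)) :
    ∃ cstar : Ξ → C, Measurable cstar ∧
      ∀ ξ : Ξ, ∀ c : C, J (ξ, cstar ξ) ≤ J (ξ, c) :=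
  measurable_argmin_selection_general J hJ_lsc hJ_cont
end

section
/- Let (Ξ, d_Ξ) and (C, d_C) be metric spaces with C compact, and let J : Ξ × C → ℝ be lower semi-continuous (jointly, with respect to the product topology) such that for every c ∈ C the marginal map ξ ↦ J(ξ, c) is continuous. Assume additionally that for every ξ ∈ Ξ there is a unique minimizer c*(ξ) ∈ C, i.e. a unique c ∈ C with J(ξ, c) = min_{c' ∈ C} J(ξ, c'). Then the argmin map ξ ↦ c*(ξ) is continuous from Ξ to C. -/
/-- Continuity of the argmin map: if `C` is a compact metric space,
`J : Ξ × C → ℝ` is jointly lower semicontinuous, continuous in the first variable,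
and for every `ξ` the minimizer `cstar ξ` of `J (ξ, ·)` over `C` is unique,
then the argmin map `ξ ↦ cstar ξ` is continuous. -/
theorem continuous_argmin_map
    {Ξ : Type*} [MetricSpace Ξ]
    {C : Type*} [MetricSpace C] [CompactSpace C]
    (J : Ξ × C → ℝ)
    (hJ_lsc : LowerSemicontinuous J)
    (hJ_cont : ∀ c : C, Continuous fun ξ : Ξ => J (ξ, c))
    (cstar : Ξ → C)
    (hmin : ∀ ξ : Ξ, ∀ c : C, J (ξ, cstar ξ) ≤ J (ξ, c))
    (huniq : ∀ ξ : Ξ, ∀ c : C, (∀ c' : C, J (ξ, c) ≤ J (ξ, c')) → c = cstar ξ) :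
    Continuous cstar := by
  rw [continuous_iff_continuousAt]
  intro ξ
  unfold ContinuousAt
  apply Filter.tendsto_of_subseq_tendsto
  intro ns hns
  -- extract a convergent subsequence of `cstar ∘ ns`
  obtain ⟨c, -, φ, hφ, hc⟩ :=
    isCompact_univ.tendsto_subseq (x := fun n => cstar (ns n)) (fun n => Set.mem_univ _)
  refine ⟨φ, ?_⟩
  have hnsφ : Filter.Tendsto (fun n => ns (φ n)) Filter.atTop (nhds ξ) :=
    hns.comp hφ.tendsto_atTop
  -- c is a minimizer of J (ξ, ·)
  have hminc : ∀ c' : C, J (ξ, c) ≤ J (ξ, c') := by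
    intro c'
    by_contra hlt
    push_neg at hlt
    set y := (J (ξ, c') + J (ξ, c)) / 2 with hy
    have hy1 : J (ξ, c') < y := by rw [hy]; linarith
    have hy2 : y < J (ξ, c) := by rw [hy]; linarith
    have hpair : Filter.Tendsto (fun n => (ns (φ n), cstar (ns (φ n)))) Filter.atTop
        (nhds (ξ, c)) := by
      rw [nhds_prod_eq]
      exact hnsφ.prodMk hc
    have h1 : ∀ᶠ n in Filter.atTop, y < J (ns (φ n), cstar (ns (φ n))) :=
      hpair.eventually (hJ_lsc (ξ, c) y hy2)
    have h2 : ∀ᶠ n in Filter.atTop, J (ns (φ n), c') < y :=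
      (((hJ_cont c').tendsto ξ).comp hnsφ).eventually (eventually_lt_nhds hy1)
    obtain ⟨n, hn1, hn2⟩ := (h1.and h2).exists
    exact absurd (hmin (ns (φ n)) c') (by linarith)
  have : c = cstar ξ := huniq ξ c hminc
  rwa [this] at hc
end

section
/- Let (H, ‖·‖) be a separable Hilbert space, A ∈ 𝒦(H) a compact operator, and let A_n := Σ_{i=1}^n σ_i(A) ⟨·, u_i⟩ v_i be a truncation of the canonical (SVD) expansion A = Σ_{i=1}^∞ σ_i(A) ⟨·, u_i⟩ v_i with orthonormal {u_i}, {v_i}. Then ‖A − A_n‖_HS² = inf{‖A − L‖_HS² : L ∈ 𝒦(H), rank(L) ≤ n} = Σ_{i=n+1}^∞ σ_i(A)², where ‖·‖_HS is the Hilbert–Schmidt norm (and both sides equal +∞ if A is not Hilbert–Schmidt). -/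
open scoped InnerProductSpace RealInnerProductSpace ENNReal
open Filter Topology

/-! Lower bound: if `rank L ≤ n`, then `σ_{n+j+1}(A) ≤ σ_{j+1}(A - L)` (Weyl), because
`rank (L + M) ≤ rank L + rank M` and the singular values are approximation numbers.
Upper bound: removing `j` further terms of the expansion from `A - A_n` leaves the tail
`Σ_{i > n+j} σ_i(A) ⟪u_i, ·⟫ v_i`, whose operator norm is at most `σ_{n+j+1}(A)` by
orthonormality and monotonicity of the `σ_i`; hence `σ_{j+1}(A - A_n) ≤ σ_{n+j+1}(A)`.
Summing squares, `A_n` attains the infimum and both equal `Σ_{i>n} σ_i(A)²`. -/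

/-- The `n`-th singular value of an operator `A`, following Allahverdiev's
characterization: `σ_n(A) := inf {‖A - L‖ : L compact, rank L ≤ n - 1}`. -/
noncomputable def sval {H : Type*} [NormedAddCommGroup H] [InnerProductSpace ℝ H]
    (A : H →L[ℝ] H) (n : ℕ) : ℝ :=
  sInf {r : ℝ | ∃ L : H →L[ℝ] H, IsCompactOperator L ∧
    Module.rank ℝ (LinearMap.range (L : H →ₗ[ℝ] H)) ≤ ((n - 1 : ℕ) : Cardinal) ∧ r = ‖A - L‖}

/-- The rank-one operator `x ↦ ⟪u, x⟫ • v`. -/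
noncomputable def rankOne {H : Type*} [NormedAddCommGroup H] [InnerProductSpace ℝ H]
    (u v : H) : H →L[ℝ] H := (innerSL ℝ u).smulRight v

/-- The squared Hilbert–Schmidt norm `‖A‖_HS² = Σ_{i=1}^∞ σ_i(A)²`, valued in `ℝ≥0∞`
(it equals `+∞` exactly when `A` is not Hilbert–Schmidt). -/
noncomputable def hsNormSq {H : Type*} [NormedAddCommGroup H] [InnerProductSpace ℝ H]
    (A : H →L[ℝ] H) : ℝ≥0∞ := ∑' i : ℕ, ENNReal.ofReal (sval A (i + 1) ^ 2)

section SingularValues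

variable {H : Type*} [NormedAddCommGroup H] [InnerProductSpace ℝ H]

lemma sval_nonneg (A : H →L[ℝ] H) (n : ℕ) : 0 ≤ sval A n :=
  Real.sInf_nonneg fun _ ⟨_, _, _, hr⟩ => hr ▸ norm_nonneg _

lemma bddBelow_svalSet (A : H →L[ℝ] H) (n : ℕ) :
    BddBelow {r : ℝ | ∃ L : H →L[ℝ] H, IsCompactOperator L ∧
      Module.rank ℝ (LinearMap.range (L : H →ₗ[ℝ] H)) ≤ ((n - 1 : ℕ) : Cardinal) ∧
        r = ‖A - L‖} :=
  ⟨0, fun _ ⟨_, _, _, hr⟩ => hr ▸ norm_nonneg _⟩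

lemma sval_le_norm_sub (A : H →L[ℝ] H) {n : ℕ} {L : H →L[ℝ] H} (hL : IsCompactOperator L)
    (hrank : (L : H →ₗ[ℝ] H).rank ≤ ((n - 1 : ℕ) : Cardinal)) :
    sval A n ≤ ‖A - L‖ :=
  csInf_le (bddBelow_svalSet A n) ⟨L, hL, hrank, rfl⟩

lemma sval_antitone (A : H →L[ℝ] H) : Antitone (sval A) := fun m n hmn => by
  refine csInf_le_csInf (bddBelow_svalSet A n) ⟨_, 0, isCompactOperator_zero, by simp, rfl⟩ ?_
  rintro _ ⟨L, hL, hrank, rfl⟩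
  exact ⟨L, hL, hrank.trans (Nat.cast_le.mpr (Nat.sub_le_sub_right hmn 1)), rfl⟩

lemma sval_add_le_sval_sub (A : H →L[ℝ] H) {L : H →L[ℝ] H} (hL : IsCompactOperator L)
    {k : ℕ} (hrank : (L : H →ₗ[ℝ] H).rank ≤ k) (j : ℕ) :
    sval A (k + j + 1) ≤ sval (A - L) (j + 1) := by
  refine le_csInf ⟨_, 0, isCompactOperator_zero, by simp, rfl⟩ ?_
  rintro _ ⟨M, hM, hMrank, rfl⟩
  have hrank_add : ((L + M : H →L[ℝ] H) : H →ₗ[ℝ] H).rank ≤ ((k + j + 1 - 1 : ℕ) : Cardinal) :=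
    calc ((L + M : H →L[ℝ] H) : H →ₗ[ℝ] H).rank
        ≤ (L : H →ₗ[ℝ] H).rank + (M : H →ₗ[ℝ] H).rank := LinearMap.rank_add_le _ _
      _ ≤ k + j := add_le_add hrank (by simpa using hMrank)
      _ = ((k + j + 1 - 1 : ℕ) : Cardinal) := by simp
  calc sval A (k + j + 1) ≤ ‖A - (L + M)‖ := sval_le_norm_sub A (hL.add hM) hrank_add
    _ = ‖A - L - M‖ := by rw [sub_add_eq_sub_sub]

lemma tsum_sval_le_hsNormSq_sub (A : H →L[ℝ] H) {L : H →L[ℝ] H} (hL : IsCompactOperator L)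
    {n : ℕ} (hrank : (L : H →ₗ[ℝ] H).rank ≤ n) :
    ∑' i : ℕ, ENNReal.ofReal (sval A (n + 1 + i) ^ 2) ≤ hsNormSq (A - L) := by
  unfold hsNormSq
  gcongr with i
  · exact sval_nonneg _ _
  · simpa [add_right_comm] using sval_add_le_sval_sub A hL hrank i

end SingularValues

section RankOne

variable {H : Type*} [NormedAddCommGroup H] [InnerProductSpace ℝ H]

lemma rankOne_apply (u v x : H) : rankOne u v x = ⟪u, x⟫ • v := rfl

lemma isCompactOperator_rankOne (u v : H) : IsCompactOperator (rankOne u v) :=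
  (isCompactOperator_of_locallyCompactSpace_rng (ContinuousLinearMap.toSpanSingleton ℝ v)).comp_clm
    (innerSL ℝ u)

lemma rank_smul_rankOne_le_one (c : ℝ) (u v : H) :
    ((c • rankOne u v : H →L[ℝ] H) : H →ₗ[ℝ] H).rank ≤ 1 := by
  have hrange : LinearMap.range ((c • rankOne u v : H →L[ℝ] H) : H →ₗ[ℝ] H) ≤ ℝ ∙ v := by
    rintro _ ⟨x, rfl⟩
    exact Submodule.mem_span_singleton.mpr ⟨c * ⟪u, x⟫, by simp [rankOne_apply, smul_smul]⟩
  exact (Submodule.rank_mono hrange).trans ((rank_span_le _).trans (Cardinal.mk_singleton v).le)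

variable (u v : ℕ → H) (c : ℕ → ℝ) (s : Finset ℕ)

lemma isCompactOperator_sum_smul_rankOne :
    IsCompactOperator (∑ i ∈ s, c i • rankOne (u i) (v i) : H →L[ℝ] H) :=
  (Submodule.sum_mem (compactOperator (RingHom.id ℝ) H H) fun i _ =>
    (isCompactOperator_rankOne (u i) (v i)).smul (c i) : _ ∈ compactOperator (RingHom.id ℝ) H H)

lemma rank_sum_smul_rankOne_le_card :
    ((∑ i ∈ s, c i • rankOne (u i) (v i) : H →L[ℝ] H) : H →ₗ[ℝ] H).rank ≤ s.card :=
  calc ((∑ i ∈ s, c i • rankOne (u i) (v i) : H →L[ℝ] H) : H →ₗ[ℝ] H).rank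
      ≤ ∑ i ∈ s, ((c i • rankOne (u i) (v i) : H →L[ℝ] H) : H →ₗ[ℝ] H).rank := by
        rw [ContinuousLinearMap.toLinearMap_sum]
        exact LinearMap.rank_finsetSum_le _ _
    _ ≤ ∑ _i ∈ s, (1 : Cardinal) := Finset.sum_le_sum fun i _ => rank_smul_rankOne_le_one _ _ _
    _ = s.card := by simp

variable {u v}

/-- Orthonormality of `v` turns the norm into an `ℓ²` sum, and Bessel's inequality for `u`
bounds that sum by `C² ‖x‖²`. -/
lemma norm_sum_smul_rankOne_le (hu : Orthonormal ℝ u) (hv : Orthonormal ℝ v) {C : ℝ}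
    (hC₀ : 0 ≤ C) (hC : ∀ i ∈ s, |c i| ≤ C) :
    ‖∑ i ∈ s, c i • rankOne (u i) (v i)‖ ≤ C := by
  refine ContinuousLinearMap.opNorm_le_bound _ hC₀ fun x => ?_
  have happly : (∑ i ∈ s, c i • rankOne (u i) (v i)) x = ∑ i ∈ s, (c i * ⟪u i, x⟫) • v i := by
    simp [rankOne_apply, smul_smul]
  have hsq : ‖∑ i ∈ s, (c i * ⟪u i, x⟫) • v i‖ ^ 2 ≤ (C * ‖x‖) ^ 2 :=
    calc ‖∑ i ∈ s, (c i * ⟪u i, x⟫) • v i‖ ^ 2 = ∑ i ∈ s, (c i * ⟪u i, x⟫) ^ 2 := by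
          rw [← real_inner_self_eq_norm_sq, hv.inner_sum]
          simp [sq]
      _ ≤ ∑ i ∈ s, C ^ 2 * ⟪u i, x⟫ ^ 2 := by
          refine Finset.sum_le_sum fun i hi => ?_
          rw [mul_pow, ← sq_abs (c i)]
          gcongr
          exact hC i hi
      _ = C ^ 2 * ∑ i ∈ s, ‖⟪u i, x⟫‖ ^ 2 := by simp [Finset.mul_sum]
      _ ≤ C ^ 2 * ‖x‖ ^ 2 := by gcongr; exact hu.sum_inner_products_le x
      _ = (C * ‖x‖) ^ 2 := by ring
  rw [happly]
  exact le_of_pow_le_pow_left₀ two_ne_zero (by positivity) hsq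

end RankOne

section Truncation

variable {H : Type*} [NormedAddCommGroup H] [InnerProductSpace ℝ H]
  {A : H →L[ℝ] H} {u v : ℕ → H}

lemma norm_sub_sum_range_smul_rankOne_le (hu : Orthonormal ℝ u) (hv : Orthonormal ℝ v)
    (hexp : Tendsto (fun m : ℕ => ∑ i ∈ Finset.range m, sval A (i + 1) • rankOne (u i) (v i))
      atTop (𝓝 A)) (m : ℕ) :
    ‖A - ∑ i ∈ Finset.range m, sval A (i + 1) • rankOne (u i) (v i)‖ ≤ sval A (m + 1) := by
  set S : ℕ → H →L[ℝ] H := fun p => ∑ i ∈ Finset.range p, sval A (i + 1) • rankOne (u i) (v i)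
  refine le_of_tendsto ((hexp.sub_const (S m)).norm) ?_
  filter_upwards [eventually_ge_atTop m] with p hp
  rw [← Finset.sum_sdiff_eq_sub (Finset.range_subset_range.mpr hp)]
  refine norm_sum_smul_rankOne_le _ _ hu hv (sval_nonneg A _) fun i hi => ?_
  rw [abs_of_nonneg (sval_nonneg A _)]
  exact sval_antitone A (by simp at hi; omega)

lemma sval_sub_sum_range_smul_rankOne_le (hu : Orthonormal ℝ u) (hv : Orthonormal ℝ v)
    (hexp : Tendsto (fun m : ℕ => ∑ i ∈ Finset.range m, sval A (i + 1) • rankOne (u i) (v i))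
      atTop (𝓝 A)) (n j : ℕ) :
    sval (A - ∑ i ∈ Finset.range n, sval A (i + 1) • rankOne (u i) (v i)) (j + 1) ≤
      sval A (n + j + 1) := by
  have hsub : Finset.range n ⊆ Finset.range (n + j) := Finset.range_subset_range.mpr (by omega)
  set c : ℕ → ℝ := fun i => sval A (i + 1)
  set D := ∑ i ∈ Finset.range (n + j) \ Finset.range n, c i • rankOne (u i) (v i)
  have hDrank : (D : H →ₗ[ℝ] H).rank ≤ ((j + 1 - 1 : ℕ) : Cardinal) := by
    refine (rank_sum_smul_rankOne_le_card u v c _).trans ?_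
    simp [Finset.card_sdiff_of_subset hsub]
  calc sval (A - ∑ i ∈ Finset.range n, c i • rankOne (u i) (v i)) (j + 1)
      ≤ ‖A - ∑ i ∈ Finset.range n, c i • rankOne (u i) (v i) - D‖ :=
        sval_le_norm_sub _ (isCompactOperator_sum_smul_rankOne u v c _) hDrank
    _ = ‖A - ∑ i ∈ Finset.range (n + j), c i • rankOne (u i) (v i)‖ := by
        rw [← Finset.sum_sdiff hsub, sub_sub, add_comm]
    _ ≤ sval A (n + j + 1) := norm_sub_sum_range_smul_rankOne_le hu hv hexp (n + j)

lemma hsNormSq_sub_sum_range_smul_rankOne_le (hu : Orthonormal ℝ u) (hv : Orthonormal ℝ v)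
    (hexp : Tendsto (fun m : ℕ => ∑ i ∈ Finset.range m, sval A (i + 1) • rankOne (u i) (v i))
      atTop (𝓝 A)) (n : ℕ) :
    hsNormSq (A - ∑ i ∈ Finset.range n, sval A (i + 1) • rankOne (u i) (v i)) ≤
      ∑' i : ℕ, ENNReal.ofReal (sval A (n + 1 + i) ^ 2) := by
  unfold hsNormSq
  gcongr with i
  · exact sval_nonneg _ _
  · simpa [add_right_comm] using sval_sub_sum_range_smul_rankOne_le hu hv hexp n i

end Truncation

theorem svd_truncation_optimal_hs_general
    {H : Type*} [NormedAddCommGroup H] [InnerProductSpace ℝ H]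
    (A : H →L[ℝ] H)
    (u v : ℕ → H) (hu : Orthonormal ℝ u) (hv : Orthonormal ℝ v)
    (hexp : Tendsto (fun m : ℕ => ∑ i ∈ Finset.range m, sval A (i + 1) • rankOne (u i) (v i))
      atTop (𝓝 A))
    (n : ℕ) :
    hsNormSq (A - ∑ i ∈ Finset.range n, sval A (i + 1) • rankOne (u i) (v i)) =
      sInf {r : ℝ≥0∞ | ∃ L : H →L[ℝ] H, IsCompactOperator L ∧
        Module.rank ℝ (LinearMap.range (L : H →ₗ[ℝ] H)) ≤ (n : Cardinal) ∧ r = hsNormSq (A - L)} ∧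
    sInf {r : ℝ≥0∞ | ∃ L : H →L[ℝ] H, IsCompactOperator L ∧
        Module.rank ℝ (LinearMap.range (L : H →ₗ[ℝ] H)) ≤ (n : Cardinal) ∧ r = hsNormSq (A - L)} =
      ∑' i : ℕ, ENNReal.ofReal (sval A (n + 1 + i) ^ 2) := by
  set S : Set ℝ≥0∞ := {r | ∃ L : H →L[ℝ] H, IsCompactOperator L ∧
    Module.rank ℝ (LinearMap.range (L : H →ₗ[ℝ] H)) ≤ (n : Cardinal) ∧ r = hsNormSq (A - L)}
  have hattained :
      sInf S ≤ hsNormSq (A - ∑ i ∈ Finset.range n, sval A (i + 1) • rankOne (u i) (v i)) :=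
    sInf_le ⟨_, isCompactOperator_sum_smul_rankOne u v _ _,
      (rank_sum_smul_rankOne_le_card u v _ _).trans (by simp), rfl⟩
  have hlower : ∑' i : ℕ, ENNReal.ofReal (sval A (n + 1 + i) ^ 2) ≤ sInf S :=
    le_sInf fun _ ⟨L, hL, hrank, hr⟩ => hr ▸ tsum_sval_le_hsNormSq_sub A hL hrank
  have hupper := hsNormSq_sub_sum_range_smul_rankOne_le hu hv hexp n
  exact ⟨le_antisymm (hupper.trans hlower) hattained,
    le_antisymm (hattained.trans hupper) hlower⟩

/-- For a compact operator `A` on a separable Hilbert space with canonical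
(SVD) expansion `A = Σ_{i=1}^∞ σ_i(A) ⟨·, u_i⟩ v_i`, the truncation
`A_n = Σ_{i=1}^n σ_i(A) ⟨·, u_i⟩ v_i` satisfies
`‖A − A_n‖_HS² = inf {‖A − L‖_HS² : L compact, rank L ≤ n} = Σ_{i=n+1}^∞ σ_i(A)²`,
all three quantities being possibly `+∞` (namely when `A` is not Hilbert–Schmidt). -/
theorem svd_truncation_optimal_hs
    {H : Type*} [NormedAddCommGroup H] [InnerProductSpace ℝ H]
    [CompleteSpace H] [TopologicalSpace.SeparableSpace H]
    (A : H →L[ℝ] H) (hA : IsCompactOperator A)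
    (u v : ℕ → H) (hu : Orthonormal ℝ u) (hv : Orthonormal ℝ v)
    (hexp : Tendsto (fun m : ℕ => ∑ i ∈ Finset.range m, sval A (i + 1) • rankOne (u i) (v i))
      atTop (𝓝 A))
    (n : ℕ) (hn : 0 < n) :
    hsNormSq (A - ∑ i ∈ Finset.range n, sval A (i + 1) • rankOne (u i) (v i)) =
      sInf {r : ℝ≥0∞ | ∃ L : H →L[ℝ] H, IsCompactOperator L ∧
        Module.rank ℝ (LinearMap.range (L : H →ₗ[ℝ] H)) ≤ (n : Cardinal) ∧ r = hsNormSq (A - L)} ∧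
    sInf {r : ℝ≥0∞ | ∃ L : H →L[ℝ] H, IsCompactOperator L ∧
        Module.rank ℝ (LinearMap.range (L : H →ₗ[ℝ] H)) ≤ (n : Cardinal) ∧ r = hsNormSq (A - L)} =
      ∑' i : ℕ, ENNReal.ofReal (sval A (n + 1 + i) ^ 2) :=
  svd_truncation_optimal_hs_general A u v hu hv hexp n
end

section
/- Let (H, ‖·‖) be a separable Hilbert space, X an H-valued random variable with 𝔼‖X‖² < ∞, and B(u) := 𝔼[⟨u, X⟩ X] its uncentered covariance operator, with eigenvalues λ₁ ≥ λ₂ ≥ … ≥ 0 and corresponding orthonormal eigenvectors {v_i}. Then for every orthogonal projection P : H → H one has 𝔼‖X − P X‖² = 𝔼‖X‖² − Σ_{i=1}^∞ λ_i ‖P v_i‖². -/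
open scoped InnerProductSpace RealInnerProductSpace
open MeasureTheory

/-- Let `X` be an `H`-valued random variable with `𝔼‖X‖² < ∞` and let
`B u = 𝔼[⟪u, X⟫ X]` be its uncentered covariance operator, with nonincreasing nonnegative
eigenvalues `λ i` and a corresponding complete orthonormal system of eigenvectors `v i`.
Then for every orthogonal projection `P : H → H` (i.e. `P` idempotent and symmetric),
`𝔼‖X − P X‖² = 𝔼‖X‖² − Σ_{i=1}^∞ λ_i ‖P v_i‖²`. -/
theorem expected_projection_error
    {H : Type*} [NormedAddCommGroup H] [InnerProductSpace ℝ H]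
    [CompleteSpace H] [TopologicalSpace.SeparableSpace H]
    [MeasurableSpace H] [BorelSpace H]
    {Ω : Type*} [MeasurableSpace Ω] (ℙ : Measure Ω) [IsProbabilityMeasure ℙ]
    (X : Ω → H) (hXm : Measurable X)
    (hX2 : Integrable (fun ω => ‖X ω‖ ^ 2) ℙ)
    (B : H →L[ℝ] H) (hB : ∀ u : H, B u = ∫ ω, ⟪u, X ω⟫_ℝ • X ω ∂ℙ)
    (lam : ℕ → ℝ) (v : ℕ → H)
    (hlam_mono : Antitone lam) (hlam_nonneg : ∀ i, 0 ≤ lam i)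
    (hv_on : Orthonormal ℝ v)
    (heig : ∀ i, B (v i) = lam i • v i)
    (hcomplete : (Submodule.span ℝ (Set.range v)).topologicalClosure = ⊤)
    (P : H →L[ℝ] H)
    (hP_idem : P.comp P = P)
    (hP_sym : ∀ x y : H, ⟪P x, y⟫_ℝ = ⟪x, P y⟫_ℝ) :
    ∫ ω, ‖X ω - P (X ω)‖ ^ 2 ∂ℙ =
      (∫ ω, ‖X ω‖ ^ 2 ∂ℙ) - ∑' i : ℕ, lam i * ‖P (v i)‖ ^ 2 := by
  classical
  have hidem : ∀ x : H, P (P x) = P x := by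
    intro x
    have := ContinuousLinearMap.ext_iff.mp hP_idem x
    simpa using this
  -- The Hilbert basis
  have hsp : ⊤ ≤ (Submodule.span ℝ (Set.range v)).topologicalClosure := hcomplete.ge
  set b : HilbertBasis ℕ ℝ H := HilbertBasis.mk hv_on hsp with hbdef
  have hb : ⇑b = v := HilbertBasis.coe_mk hv_on hsp
  -- Parseval
  have parseval : ∀ y : H, HasSum (fun i => ⟪v i, y⟫_ℝ ^ 2) (‖y‖ ^ 2) := by
    intro y
    have h := b.hasSum_inner_mul_inner y y
    rw [hb, real_inner_self_eq_norm_sq] at h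
    have heq : (fun i => ⟪y, v i⟫_ℝ * ⟪v i, y⟫_ℝ) = fun i => ⟪v i, y⟫_ℝ ^ 2 := by
      funext i; rw [real_inner_comm]; ring
    rwa [heq] at h
  -- Integrability of the integrand of B
  have hXim : ∀ u : H, Integrable (fun ω => ⟪u, X ω⟫_ℝ • X ω) ℙ := by
    intro u
    refine Integrable.mono' (hX2.const_mul ‖u‖) ?_ ?_
    · exact ((measurable_const.inner hXm).smul hXm).aestronglyMeasurable
    · filter_upwards with ω
      rw [norm_smul]
      calc ‖⟪u, X ω⟫_ℝ‖ * ‖X ω‖ ≤ (‖u‖ * ‖X ω‖) * ‖X ω‖ := by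
            gcongr
            exact (Real.norm_eq_abs _).le.trans (abs_real_inner_le_norm u (X ω))
        _ = ‖u‖ * ‖X ω‖ ^ 2 := by ring
  -- second moment identity
  have momB : ∀ u : H, ∫ ω, ⟪u, X ω⟫_ℝ ^ 2 ∂ℙ = ⟪u, B u⟫_ℝ := by
    intro u
    rw [hB u, ← integral_inner (hXim u)]
    refine integral_congr_ae (Filter.Eventually.of_forall fun ω => ?_)
    simp only [real_inner_smul_right]
    ring
  -- spectral expansion of quadratic form
  have expand : ∀ w : H, HasSum (fun j => lam j * ⟪v j, w⟫_ℝ ^ 2) ⟪w, B w⟫_ℝ := by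
    intro w
    have h1 := b.hasSum_repr w
    have h2 := h1.mapL B
    have h3 := h2.mapL (innerSL ℝ w)
    have heq : (fun j => (innerSL ℝ w) (B (b.repr w j • b j)))
        = fun j => lam j * ⟪v j, w⟫_ℝ ^ 2 := by
      funext j
      rw [b.repr_apply_apply, hb]
      rw [ContinuousLinearMap.map_smul, heig j]
      simp only [innerSL_apply_apply, real_inner_smul_right]
      rw [real_inner_comm w (v j)]
      ring
    rwa [heq] at h3
  -- pointwise projection identity
  have hproj : ∀ x : H, ‖x - P x‖ ^ 2 = ‖x‖ ^ 2 - ‖P x‖ ^ 2 := by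
    intro x
    have h1 : ⟪x, P x⟫_ℝ = ‖P x‖ ^ 2 := by
      rw [← real_inner_self_eq_norm_sq, hP_sym x (P x), hidem x]
    rw [norm_sub_sq_real, h1]; ring
  -- integrability of ‖P X‖²
  have hPX2 : Integrable (fun ω => ‖P (X ω)‖ ^ 2) ℙ := by
    refine Integrable.mono' (hX2.const_mul (‖P‖ ^ 2)) ?_ ?_
    · exact ((P.continuous.measurable.comp hXm).norm.pow_const 2).aestronglyMeasurable
    · filter_upwards with ω
      rw [Real.norm_eq_abs, abs_of_nonneg (by positivity)]
      calc ‖P (X ω)‖ ^ 2 ≤ (‖P‖ * ‖X ω‖) ^ 2 := by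
            gcongr; exact P.le_opNorm (X ω)
        _ = ‖P‖ ^ 2 * ‖X ω‖ ^ 2 := by ring
  -- the per-mode integrand
  set g : ℕ → Ω → ℝ := fun i ω => ⟪P (v i), X ω⟫_ℝ ^ 2 with hgdef
  have hg_nonneg : ∀ i ω, 0 ≤ g i ω := fun i ω => sq_nonneg _
  have hg_meas : ∀ i, Measurable (g i) := fun i =>
    (measurable_const.inner hXm).pow_const 2
  have hg_hasSum : ∀ ω, HasSum (fun i => g i ω) (‖P (X ω)‖ ^ 2) := by
    intro ω
    have h := parseval (P (X ω))
    have heq : (fun i => ⟪v i, P (X ω)⟫_ℝ ^ 2) = fun i => g i ω := by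
      funext i
      show ⟪v i, P (X ω)⟫_ℝ ^ 2 = ⟪P (v i), X ω⟫_ℝ ^ 2
      rw [hP_sym]
    rwa [heq] at h
  -- finiteness of the total lintegral
  have key_fin : ∑' i, ∫⁻ ω, ENNReal.ofReal (g i ω) ∂ℙ ≠ ⊤ := by
    rw [← lintegral_tsum fun i => ((hg_meas i).ennreal_ofReal).aemeasurable]
    have hpt : ∀ ω, ∑' i, ENNReal.ofReal (g i ω) = ENNReal.ofReal (‖P (X ω)‖ ^ 2) := by
      intro ω
      rw [← ENNReal.ofReal_tsum_of_nonneg (fun i => hg_nonneg i ω) (hg_hasSum ω).summable,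
        (hg_hasSum ω).tsum_eq]
    have hle : ∫⁻ ω, ∑' i, ENNReal.ofReal (g i ω) ∂ℙ
        ≤ ∫⁻ ω, (‖‖P (X ω)‖ ^ 2‖₊ : ENNReal) ∂ℙ := by
      refine lintegral_mono fun ω => ?_
      rw [hpt ω]
      exact Real.ofReal_le_enorm _
    exact (hle.trans_lt hPX2.2).ne
  -- swap integral and sum
  have step_int : ∫ ω, ‖P (X ω)‖ ^ 2 ∂ℙ = ∑' i, ∫ ω, g i ω ∂ℙ := by
    have hf' : ∑' i, ∫⁻ a, (‖g i a‖₊ : ENNReal) ∂ℙ ≠ ⊤ := by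
      have heq : ∀ i, ∫⁻ a, (‖g i a‖₊ : ENNReal) ∂ℙ = ∫⁻ a, ENNReal.ofReal (g i a) ∂ℙ :=
        fun i => lintegral_congr fun a => Real.enorm_eq_ofReal (hg_nonneg i a)
      simp_rw [heq]; exact key_fin
    have := integral_tsum (f := g) (μ := ℙ)
      (fun i => (hg_meas i).aestronglyMeasurable) hf'
    rw [← this]
    exact integral_congr_ae (Filter.Eventually.of_forall fun ω => ((hg_hasSum ω).tsum_eq).symm)
  -- summability of the per-mode second moments
  have hsum_mom : Summable fun i => ∫ ω, g i ω ∂ℙ := by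
    have heq : ∀ i, ∫ ω, g i ω ∂ℙ = (∫⁻ ω, ENNReal.ofReal (g i ω) ∂ℙ).toReal := by
      intro i
      rw [integral_eq_lintegral_of_nonneg_ae (Filter.Eventually.of_forall (hg_nonneg i))
        (hg_meas i).aestronglyMeasurable]
    rw [funext heq]
    exact ENNReal.summable_toReal key_fin
  have hmom_eq : ∀ i, ∫ ω, g i ω ∂ℙ = ⟪P (v i), B (P (v i))⟫_ℝ := fun i => momB _
  -- double sum swap
  set f : ℕ → ℕ → ℝ := fun i j => lam j * ⟪v j, P (v i)⟫_ℝ ^ 2 with hfdef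
  have hf_nonneg : ∀ i j, 0 ≤ f i j := fun i j =>
    mul_nonneg (hlam_nonneg j) (sq_nonneg _)
  have hrow : ∀ i, HasSum (f i) ⟪P (v i), B (P (v i))⟫_ℝ := fun i => expand (P (v i))
  have hcol_sym : ∀ i j, f i j = lam j * ⟪v i, P (v j)⟫_ℝ ^ 2 := by
    intro i j
    show lam j * ⟪v j, P (v i)⟫_ℝ ^ 2 = lam j * ⟪v i, P (v j)⟫_ℝ ^ 2
    have h : ⟪v j, P (v i)⟫_ℝ = ⟪v i, P (v j)⟫_ℝ := by
      rw [← hP_sym (v j) (v i), real_inner_comm]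
    rw [h]
  have hcol : ∀ j, Summable fun i => f i j := by
    intro j
    have h := ((parseval (P (v j))).summable).mul_left (lam j)
    exact h.congr fun i => (hcol_sym i j).symm
  have hprod : Summable (Function.uncurry f) := by
    refine (summable_prod_of_nonneg ?_).mpr ⟨fun i => (hrow i).summable, ?_⟩
    · intro p; exact hf_nonneg p.1 p.2
    · refine hsum_mom.congr fun i => ?_
      exact (hmom_eq i).trans (hrow i).tsum_eq.symm
  have swap : ∑' i, ∑' j, f i j = ∑' j, ∑' i, f i j :=
    (Summable.tsum_comm' hprod (fun i => (hrow i).summable) hcol).symm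
  -- compute the column sums
  have hcolsum : ∀ j, ∑' i, f i j = lam j * ‖P (v j)‖ ^ 2 := by
    intro j
    have h := (parseval (P (v j))).mul_left (lam j)
    have heq2 : (fun i => lam j * ⟪v i, P (v j)⟫_ℝ ^ 2) = fun i => f i j := by
      funext i; exact (hcol_sym i j).symm
    rw [heq2] at h
    exact h.tsum_eq
  -- assemble step 3
  have step3 : ∫ ω, ‖P (X ω)‖ ^ 2 ∂ℙ = ∑' j, lam j * ‖P (v j)‖ ^ 2 := by
    rw [step_int]
    have heq : ∀ i, ∫ ω, g i ω ∂ℙ = ∑' j, f i j := by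
      intro i; rw [hmom_eq i, (hrow i).tsum_eq]
    rw [funext heq, swap]
    exact tsum_congr hcolsum
  -- final assembly
  calc ∫ ω, ‖X ω - P (X ω)‖ ^ 2 ∂ℙ
      = ∫ ω, (‖X ω‖ ^ 2 - ‖P (X ω)‖ ^ 2) ∂ℙ :=
        integral_congr_ae (Filter.Eventually.of_forall fun ω => hproj (X ω))
    _ = (∫ ω, ‖X ω‖ ^ 2 ∂ℙ) - ∫ ω, ‖P (X ω)‖ ^ 2 ∂ℙ := integral_sub hX2 hPX2
    _ = (∫ ω, ‖X ω‖ ^ 2 ∂ℙ) - ∑' i : ℕ, lam i * ‖P (v i)‖ ^ 2 := by rw [step3]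
end

section
/- Let (H, ‖·‖) be a separable Hilbert space, X an H-valued random variable with 𝔼‖X‖² < ∞, and B(u) := 𝔼[⟨u, X⟩ X] its uncentered covariance operator, with eigenvalues λ₁ ≥ λ₂ ≥ … ≥ 0 and orthonormal eigenvectors {v_i}. Setting η_i := ⟨X, v_i⟩/√λ_i (for λ_i > 0), for every n ∈ ℕ₊ the random variable X_n := Σ_{i=1}^n √λ_i η_i v_i satisfies 𝔼‖X − X_n‖² = inf_{Z ∈ Q_n} 𝔼‖X − Z‖² = Σ_{i=n+1}^∞ λ_i, where Q_n := {Z ∈ L²_H : there exists a subspace V ⊆ H with dim(V) ≤ n such that Z ∈ V almost surely}. -/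
open scoped InnerProductSpace RealInnerProductSpace
open MeasureTheory

/-!
By Parseval, `‖X - X_n‖² = ∑_{i ≥ n} ⟪X, v i⟫²`, and `𝔼⟪X, v i⟫² = ⟪v i, B (v i)⟫ = λ i`, so the
truncation error is the tail `∑_{i ≥ n} λ i`. If `Z` takes values in a subspace `V` with
orthonormal basis `e 1, …, e m`, `m ≤ n`, then the orthogonal projection onto `V` is closer to
`X` than `Z`, whence `𝔼‖X - Z‖² ≥ 𝔼‖X‖² - ∑ j, ⟪e j, B (e j)⟫`. Expanding in the eigenbasis,
`∑ j, ⟪e j, B (e j)⟫ = ∑ i, λ i * c i` with weights `c i = ∑ j, ⟪e j, v i⟫² ∈ [0, 1]` summing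
to `m`; since `λ` is nonincreasing, such a sum is at most `λ 0 + … + λ (m - 1)`.
-/

open Finset in
theorem Antitone.tsum_mul_le_sum_range {lam c : ℕ → ℝ} (hlam : Antitone lam)
    (hc0 : ∀ i, 0 ≤ c i) (hc1 : ∀ i, c i ≤ 1) {m : ℕ} (hc : HasSum c m)
    (hlc : Summable fun i => lam i * c i) :
    ∑' i, lam i * c i ≤ ∑ i ∈ range m, lam i := by
  have htail : ∑' i, c (i + m) = m - ∑ i ∈ range m, c i := by
    rw [← hc.tsum_eq, ← hc.summable.sum_add_tsum_nat_add m, add_sub_cancel_left]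
  calc ∑' i, lam i * c i
      = ∑ i ∈ range m, lam i * c i + ∑' i, lam (i + m) * c (i + m) :=
        (hlc.sum_add_tsum_nat_add m).symm
    _ ≤ ∑ i ∈ range m, lam i * c i + ∑' i, lam m * c (i + m) := by
        refine add_le_add_right (((summable_nat_add_iff m).2 hlc).tsum_le_tsum (fun i => ?_)
          (((summable_nat_add_iff m).2 hc.summable).mul_left _)) _
        exact mul_le_mul_of_nonneg_right (hlam (Nat.le_add_left m i)) (hc0 _)
    _ = ∑ i ∈ range m, (lam i * c i + lam m * (1 - c i)) := by
        rw [tsum_mul_left, htail, sum_add_distrib, ← mul_sum, sum_sub_distrib, sum_const,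
          card_range, nsmul_one]
    _ ≤ ∑ i ∈ range m, lam i := by
        refine sum_le_sum fun i hi => ?_
        have := hlam (mem_range.1 hi).le
        nlinarith [hc0 i, hc1 i]

section Hilbert

variable {H : Type*} [NormedAddCommGroup H] [InnerProductSpace ℝ H]

theorem Orthonormal.norm_sub_sum_inner_smul_sq {ι : Type*} {v : ι → H} (hv : Orthonormal ℝ v)
    (s : Finset ι) (x : H) :
    ‖x - ∑ i ∈ s, ⟪x, v i⟫ • v i‖ ^ 2 = ‖x‖ ^ 2 - ∑ i ∈ s, ⟪x, v i⟫ ^ 2 := by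
  have hsum : ⟪x, ∑ i ∈ s, ⟪x, v i⟫ • v i⟫ = ∑ i ∈ s, ⟪x, v i⟫ ^ 2 := by
    simp only [inner_sum, real_inner_smul_right, sq]
  have hnorm : ‖∑ i ∈ s, ⟪x, v i⟫ • v i‖ ^ 2 = ∑ i ∈ s, ⟪x, v i⟫ ^ 2 := by
    rw [← real_inner_self_eq_norm_sq, hv.inner_sum]
    simp only [sq, RCLike.conj_to_real]
  rw [norm_sub_sq_real, hsum, hnorm]
  ring

theorem OrthonormalBasis.norm_sq_sub_sum_inner_sq_le {ι : Type*} [Fintype ι] {V : Submodule ℝ H}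
    [V.HasOrthogonalProjection] (e : OrthonormalBasis ι ℝ V) (x : H) {z : H} (hz : z ∈ V) :
    ‖x‖ ^ 2 - ∑ j, ⟪x, e j⟫ ^ 2 ≤ ‖x - z‖ ^ 2 := by
  have he : Orthonormal ℝ fun j => (e j : H) := e.orthonormal.comp_linearIsometry V.subtypeₗᵢ
  have hproj : V.starProjection x = ∑ j, ⟪x, e j⟫ • (e j : H) := by
    simp [Submodule.starProjection_apply, e.orthogonalProjectionOnto_apply_eq_sum, real_inner_comm]
  have horth : ⟪x - V.starProjection x, V.starProjection x - z⟫ = 0 :=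
    V.starProjection_inner_eq_zero x _ (V.sub_mem (V.starProjection_apply_mem x) hz)
  calc ‖x‖ ^ 2 - ∑ j, ⟪x, e j⟫ ^ 2 = ‖x - V.starProjection x‖ ^ 2 := by
        rw [hproj, he.norm_sub_sum_inner_smul_sq]
    _ ≤ ‖x - z‖ ^ 2 := by
        rw [sq, sq, ← sub_add_sub_cancel x (V.starProjection x) z,
          norm_add_sq_eq_norm_sq_add_norm_sq_real horth]
        exact le_add_of_nonneg_right (mul_self_nonneg _)

theorem HilbertBasis.hasSum_inner_sq {ι : Type*} (b : HilbertBasis ι ℝ H) (x : H) :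
    HasSum (fun i => ⟪x, b i⟫ ^ 2) (‖x‖ ^ 2) := by
  simpa only [real_inner_self_eq_norm_sq, real_inner_comm x, sq] using b.hasSum_inner_mul_inner x x

theorem HilbertBasis.hasSum_mul_inner_sq {ι : Type*} (b : HilbertBasis ι ℝ H) {B : H →L[ℝ] H}
    {lam : ι → ℝ} (heig : ∀ i, B (b i) = lam i • b i) (x : H) :
    HasSum (fun i => lam i * ⟪x, b i⟫ ^ 2) ⟪x, B x⟫ := by
  have h := (b.hasSum_repr x).mapL ((innerSL ℝ x).comp B)
  simpa only [ContinuousLinearMap.comp_apply, innerSL_apply_apply, map_smul, heig,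
    b.repr_apply_apply, real_inner_smul_right, real_inner_comm x, smul_eq_mul, sq, mul_assoc,
    mul_left_comm] using h

/-- Ky Fan's maximum principle. -/
theorem Orthonormal.sum_inner_apply_le_sum_range {ι : Type*} [Fintype ι] {e : ι → H}
    (he : Orthonormal ℝ e) (b : HilbertBasis ℕ ℝ H) {B : H →L[ℝ] H} {lam : ℕ → ℝ}
    (heig : ∀ i, B (b i) = lam i • b i) (hlam : Antitone lam) :
    ∑ j, ⟪e j, B (e j)⟫ ≤ ∑ i ∈ Finset.range (Fintype.card ι), lam i := by
  have hc0 (i : ℕ) : 0 ≤ ∑ j, ⟪e j, b i⟫ ^ 2 := Finset.sum_nonneg fun j _ => sq_nonneg _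
  have hc1 (i : ℕ) : ∑ j, ⟪e j, b i⟫ ^ 2 ≤ 1 := by
    simpa only [Real.norm_eq_abs, sq_abs, b.orthonormal.1 i, one_pow] using
      he.sum_inner_products_le (b i) (s := Finset.univ)
  have hc : HasSum (fun i => ∑ j, ⟪e j, b i⟫ ^ 2) (Fintype.card ι) := by
    have h := hasSum_sum (s := Finset.univ) fun j _ => b.hasSum_inner_sq (e j)
    rwa [Finset.sum_congr rfl fun j _ => by rw [he.1 j, one_pow], Finset.sum_const,
      Finset.card_univ, nsmul_one] at h
  have hlc : HasSum (fun i => lam i * ∑ j, ⟪e j, b i⟫ ^ 2) (∑ j, ⟪e j, B (e j)⟫) := by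
    simpa only [Finset.mul_sum] using
      hasSum_sum (s := Finset.univ) fun j _ => b.hasSum_mul_inner_sq heig (e j)
  exact hlc.tsum_eq ▸ hlam.tsum_mul_le_sum_range hc0 hc1 hc hlc.summable

end Hilbert

/-- `{𝔼‖X - Z‖² : Z ∈ Q_n}` in the notation of the statement. -/
def lowRankApproxErrors {H : Type*} [NormedAddCommGroup H] [InnerProductSpace ℝ H]
    {Ω : Type*} [MeasurableSpace Ω] (μ : Measure Ω) (X : Ω → H) (n : ℕ) : Set ℝ :=
  {r : ℝ | ∃ Z : Ω → H, MemLp Z 2 μ ∧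
    (∃ V : Submodule ℝ H, Module.rank ℝ V ≤ (n : Cardinal) ∧ ∀ᵐ ω ∂μ, Z ω ∈ V) ∧
    r = ∫ ω, ‖X ω - Z ω‖ ^ 2 ∂μ}

namespace MeasureTheory.MemLp

variable {H : Type*} [NormedAddCommGroup H] [InnerProductSpace ℝ H]
  {Ω : Type*} [MeasurableSpace Ω] {μ : Measure Ω} {X : Ω → H}

theorem integrable_inner_sq (hX : MemLp X 2 μ) (e : H) :
    Integrable (fun ω => ⟪X ω, e⟫ ^ 2) μ := by
  simpa only [innerSL_apply_apply, real_inner_comm e] using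
    (hX.continuousLinearMap_comp (innerSL ℝ e)).integrable_sq

theorem memLp_sum_inner_smul (hX : MemLp X 2 μ) {ι : Type*} (s : Finset ι) (v : ι → H) :
    MemLp (fun ω => ∑ i ∈ s, ⟪X ω, v i⟫ • v i) 2 μ :=
  memLp_finsetSum s fun i _ => by
    simpa only [ContinuousLinearMap.smulRight_apply, innerSL_apply_apply, real_inner_comm (v i)]
      using hX.continuousLinearMap_comp ((innerSL ℝ (v i)).smulRight (v i))

theorem hasSum_integral_inner_sq (hX : MemLp X 2 μ) {ι : Type*} [Countable ι]
    (b : HilbertBasis ι ℝ H) :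
    HasSum (fun i => ∫ ω, ⟪X ω, b i⟫ ^ 2 ∂μ) (∫ ω, ‖X ω‖ ^ 2 ∂μ) := by
  refine hasSum_integral_of_dominated_convergence (fun i ω => ⟪X ω, b i⟫ ^ 2)
    (fun i => (hX.integrable_inner_sq (b i)).aestronglyMeasurable)
    (fun i => .of_forall fun ω => (Real.norm_of_nonneg (sq_nonneg _)).le)
    (.of_forall fun ω => (b.hasSum_inner_sq (X ω)).summable) ?_
    (.of_forall fun ω => b.hasSum_inner_sq (X ω))
  simpa only [(b.hasSum_inner_sq _).tsum_eq] using hX.integrable_norm_pow two_ne_zero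

theorem integral_norm_sub_sum_inner_smul_sq (hX : MemLp X 2 μ) {ι : Type*}
    {v : ι → H} (hv : Orthonormal ℝ v) (s : Finset ι) :
    ∫ ω, ‖X ω - ∑ i ∈ s, ⟪X ω, v i⟫ • v i‖ ^ 2 ∂μ
      = ∫ ω, ‖X ω‖ ^ 2 ∂μ - ∑ i ∈ s, ∫ ω, ⟪X ω, v i⟫ ^ 2 ∂μ := by
  simp only [hv.norm_sub_sum_inner_smul_sq]
  rw [integral_sub (hX.integrable_norm_pow two_ne_zero)
      (integrable_finsetSum s fun i _ => hX.integrable_inner_sq (v i)),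
    integral_finsetSum s fun i _ => hX.integrable_inner_sq (v i)]

theorem integral_norm_sq_sub_sum_inner_sq_le (hX : MemLp X 2 μ) {ι : Type*} [Fintype ι]
    {V : Submodule ℝ H} [V.HasOrthogonalProjection] (e : OrthonormalBasis ι ℝ V)
    {Z : Ω → H} (hZ : MemLp Z 2 μ) (hZV : ∀ᵐ ω ∂μ, Z ω ∈ V) :
    ∫ ω, ‖X ω‖ ^ 2 ∂μ - ∑ j, ∫ ω, ⟪X ω, e j⟫ ^ 2 ∂μ ≤ ∫ ω, ‖X ω - Z ω‖ ^ 2 ∂μ := by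
  have hint : Integrable (fun ω => ∑ j, ⟪X ω, e j⟫ ^ 2) μ :=
    integrable_finsetSum _ fun j _ => hX.integrable_inner_sq _
  rw [← integral_finsetSum _ fun j _ => hX.integrable_inner_sq _,
    ← integral_sub (hX.integrable_norm_pow two_ne_zero) hint]
  refine integral_mono_ae ((hX.integrable_norm_pow two_ne_zero).sub hint)
    ((hX.sub hZ).integrable_norm_pow two_ne_zero) ?_
  filter_upwards [hZV] with ω hω using e.norm_sq_sub_sum_inner_sq_le (X ω) hω

variable [CompleteSpace H] {B : H →L[ℝ] H}

theorem integral_inner_sq_eq_inner_apply (hX : MemLp X 2 μ)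
    (hB : ∀ u, B u = ∫ ω, ⟪u, X ω⟫ • X ω ∂μ) (e : H) :
    ∫ ω, ⟪X ω, e⟫ ^ 2 ∂μ = ⟪e, B e⟫ := by
  have hint : Integrable (fun ω => ⟪e, X ω⟫ • X ω) μ :=
    memLp_one_iff_integrable.1 (hX.smul (hX.continuousLinearMap_comp (innerSL ℝ e)) (r := 1))
  rw [hB, ← integral_inner hint]
  simp only [real_inner_smul_right, real_inner_comm e, sq]

variable (hX : MemLp X 2 μ) (hB : ∀ u, B u = ∫ ω, ⟪u, X ω⟫ • X ω ∂μ)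
  (b : HilbertBasis ℕ ℝ H) {lam : ℕ → ℝ} (heig : ∀ i, B (b i) = lam i • b i)
include hX hB heig

theorem integral_inner_sq_eq_eigenvalue (i : ℕ) : ∫ ω, ⟪X ω, b i⟫ ^ 2 ∂μ = lam i := by
  rw [hX.integral_inner_sq_eq_inner_apply hB, heig, real_inner_smul_right,
    real_inner_self_eq_norm_sq, b.orthonormal.1 i, one_pow, mul_one]

theorem integral_norm_sq_eq_sum_range_add_tsum (n : ℕ) :
    ∫ ω, ‖X ω‖ ^ 2 ∂μ = ∑ i ∈ Finset.range n, lam i + ∑' i, lam (n + i) := by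
  have htotal : HasSum lam (∫ ω, ‖X ω‖ ^ 2 ∂μ) := by
    simpa only [hX.integral_inner_sq_eq_eigenvalue hB b heig] using hX.hasSum_integral_inner_sq b
  simp only [← htotal.tsum_eq, ← htotal.summable.sum_add_tsum_nat_add n, add_comm _ n]

theorem integral_norm_sub_sum_range_sq (n : ℕ) :
    ∫ ω, ‖X ω - ∑ i ∈ Finset.range n, ⟪X ω, b i⟫ • b i‖ ^ 2 ∂μ = ∑' i, lam (n + i) := by
  rw [hX.integral_norm_sub_sum_inner_smul_sq b.orthonormal,
    hX.integral_norm_sq_eq_sum_range_add_tsum hB b heig n]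
  simp only [hX.integral_inner_sq_eq_eigenvalue hB b heig, add_sub_cancel_left]

theorem tsum_le_integral_norm_sub_sq (hlam : Antitone lam) {n : ℕ} {V : Submodule ℝ H}
    (hV : Module.rank ℝ V ≤ n) {Z : Ω → H} (hZ : MemLp Z 2 μ) (hZV : ∀ᵐ ω ∂μ, Z ω ∈ V) :
    ∑' i, lam (n + i) ≤ ∫ ω, ‖X ω - Z ω‖ ^ 2 ∂μ := by
  have : FiniteDimensional ℝ V :=
    Module.rank_lt_aleph0_iff.mp (hV.trans_lt Cardinal.natCast_lt_aleph0)
  let e := stdOrthonormalBasis ℝ V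
  have he : Orthonormal ℝ fun j => (e j : H) := e.orthonormal.comp_linearIsometry V.subtypeₗᵢ
  have hlam0 (i : ℕ) : 0 ≤ lam i :=
    hX.integral_inner_sq_eq_eigenvalue hB b heig i ▸ integral_nonneg fun _ => sq_nonneg _
  have hKyFan : ∑ j, ∫ ω, ⟪X ω, e j⟫ ^ 2 ∂μ ≤ ∑ i ∈ Finset.range n, lam i := by
    simp only [hX.integral_inner_sq_eq_inner_apply hB]
    refine (he.sum_inner_apply_le_sum_range b heig hlam).trans ?_
    rw [Fintype.card_fin]
    exact Finset.sum_le_sum_of_subset_of_nonneg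
      (Finset.range_subset_range.2 (Module.finrank_le_of_rank_le hV)) fun i _ _ => hlam0 i
  have hlower := hX.integral_norm_sq_sub_sum_inner_sq_le e hZ hZV
  rw [hX.integral_norm_sq_eq_sum_range_add_tsum hB b heig n] at hlower
  linarith

theorem isLeast_lowRankApproxErrors (hlam : Antitone lam) (n : ℕ) :
    IsLeast (lowRankApproxErrors μ X n) (∑' i, lam (n + i)) := by
  classical
  refine ⟨⟨_, hX.memLp_sum_inner_smul (Finset.range n) b,
    ⟨Submodule.span ℝ ((Finset.range n).image b), ?_, .of_forall fun ω => ?_⟩,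
    (hX.integral_norm_sub_sum_range_sq hB b heig n).symm⟩, ?_⟩
  · refine (rank_span_finset_le _).trans ?_
    exact_mod_cast Finset.card_image_le.trans (Finset.card_range n).le
  · exact Submodule.sum_mem _ fun i hi => Submodule.smul_mem _ _
      (Submodule.subset_span (Finset.mem_coe.2 (Finset.mem_image_of_mem b hi)))
  · rintro _ ⟨Z, hZ, ⟨V, hV, hZV⟩, rfl⟩
    exact hX.tsum_le_integral_norm_sub_sq hB b heig hlam hV hZ hZV

end MeasureTheory.MemLp

theorem pod_truncation_optimal_general
    {H : Type*} [NormedAddCommGroup H] [InnerProductSpace ℝ H]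
    [CompleteSpace H] [TopologicalSpace.SeparableSpace H]
    [MeasurableSpace H] [BorelSpace H]
    {Ω : Type*} [MeasurableSpace Ω] (ℙ : Measure Ω)
    (X : Ω → H) (hXm : Measurable X)
    (hX2 : Integrable (fun ω => ‖X ω‖ ^ 2) ℙ)
    (B : H →L[ℝ] H) (hB : ∀ u : H, B u = ∫ ω, ⟪u, X ω⟫_ℝ • X ω ∂ℙ)
    (lam : ℕ → ℝ) (v : ℕ → H)
    (hlam_mono : Antitone lam)
    (hv_on : Orthonormal ℝ v)
    (heig : ∀ i, B (v i) = lam i • v i)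
    (hcomplete : (Submodule.span ℝ (Set.range v)).topologicalClosure = ⊤)
    (n : ℕ) :
    (∫ ω, ‖X ω - ∑ i ∈ Finset.range n, ⟪X ω, v i⟫_ℝ • v i‖ ^ 2 ∂ℙ) =
        sInf {r : ℝ | ∃ Z : Ω → H, MemLp Z 2 ℙ ∧
          (∃ V : Submodule ℝ H, Module.rank ℝ V ≤ (n : Cardinal) ∧ ∀ᵐ ω ∂ℙ, Z ω ∈ V) ∧
          r = ∫ ω, ‖X ω - Z ω‖ ^ 2 ∂ℙ} ∧
      sInf {r : ℝ | ∃ Z : Ω → H, MemLp Z 2 ℙ ∧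
          (∃ V : Submodule ℝ H, Module.rank ℝ V ≤ (n : Cardinal) ∧ ∀ᵐ ω ∂ℙ, Z ω ∈ V) ∧
          r = ∫ ω, ‖X ω - Z ω‖ ^ 2 ∂ℙ} =
        ∑' i : ℕ, lam (n + i) := by
  have hX : MemLp X 2 ℙ := (memLp_two_iff_integrable_sq_norm hXm.aestronglyMeasurable).2 hX2
  let b := HilbertBasis.mk hv_on hcomplete.ge
  have hb : ⇑b = v := HilbertBasis.coe_mk hv_on hcomplete.ge
  have heig' : ∀ i, B (b i) = lam i • b i := by simpa only [hb] using heig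
  have htrunc := hX.integral_norm_sub_sum_range_sq hB b heig' n
  have hleast := hX.isLeast_lowRankApproxErrors hB b heig' hlam_mono n
  rw [hb] at htrunc
  exact ⟨htrunc.trans hleast.csInf_eq.symm, hleast.csInf_eq⟩

/-- (Optimality of the truncated Kosambi–Karhunen–Loève / POD expansion.)
Let `X` be an `H`-valued random variable with `𝔼‖X‖² < ∞` and let `B u = 𝔼[⟪u, X⟫ X]` be
its uncentered covariance operator, with nonincreasing nonnegative eigenvalues `λ i` and
corresponding complete orthonormal system of eigenvectors `v i`. For `n ≥ 1`, the truncation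
`X_n = Σ_{i=1}^n √λ_i η_i v_i = Σ_{i=1}^n ⟪X, v_i⟫ v_i` (with `η_i = ⟪X, v_i⟫/√λ_i`)
satisfies `𝔼‖X − X_n‖² = inf_{Z ∈ Q_n} 𝔼‖X − Z‖² = Σ_{i=n+1}^∞ λ_i`, where `Q_n` is the
set of square-integrable random variables supported (a.s.) in a subspace of dimension ≤ n. -/
theorem pod_truncation_optimal
    {H : Type*} [NormedAddCommGroup H] [InnerProductSpace ℝ H]
    [CompleteSpace H] [TopologicalSpace.SeparableSpace H]
    [MeasurableSpace H] [BorelSpace H]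
    {Ω : Type*} [MeasurableSpace Ω] (ℙ : Measure Ω) [IsProbabilityMeasure ℙ]
    (X : Ω → H) (hXm : Measurable X)
    (hX2 : Integrable (fun ω => ‖X ω‖ ^ 2) ℙ)
    (B : H →L[ℝ] H) (hB : ∀ u : H, B u = ∫ ω, ⟪u, X ω⟫_ℝ • X ω ∂ℙ)
    (lam : ℕ → ℝ) (v : ℕ → H)
    (hlam_mono : Antitone lam) (hlam_nonneg : ∀ i, 0 ≤ lam i)
    (hv_on : Orthonormal ℝ v)
    (heig : ∀ i, B (v i) = lam i • v i)
    (hcomplete : (Submodule.span ℝ (Set.range v)).topologicalClosure = ⊤)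
    (n : ℕ) (hn : 0 < n) :
    (∫ ω, ‖X ω - ∑ i ∈ Finset.range n, ⟪X ω, v i⟫_ℝ • v i‖ ^ 2 ∂ℙ) =
        sInf {r : ℝ | ∃ Z : Ω → H, MemLp Z 2 ℙ ∧
          (∃ V : Submodule ℝ H, Module.rank ℝ V ≤ (n : Cardinal) ∧ ∀ᵐ ω ∂ℙ, Z ω ∈ V) ∧
          r = ∫ ω, ‖X ω - Z ω‖ ^ 2 ∂ℙ} ∧
      sInf {r : ℝ | ∃ Z : Ω → H, MemLp Z 2 ℙ ∧
          (∃ V : Submodule ℝ H, Module.rank ℝ V ≤ (n : Cardinal) ∧ ∀ᵐ ω ∂ℙ, Z ω ∈ V) ∧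
          r = ∫ ω, ‖X ω - Z ω‖ ^ 2 ∂ℙ} =
        ∑' i : ℕ, lam (n + i) :=
  pod_truncation_optimal_general ℙ X hXm hX2 B hB lam v hlam_mono hv_on heig hcomplete n
end
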